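/- For all integers i, j with 1 ≤ i ≤ j ≤ d−1, the identity a_{i−1}·a_{j+1} − a_i·a_j = (eu₀² − 4·q·Q)·q^{d−j−1}·Q^{i−1}·Ψ_{j−i}(eu₀,q,Q) holds in ℂ[x,y,X,Y]. -/
import Mathlib


open MvPolynomial

/-- `Ψ₀ = 1`, `Ψ₁ = T`, `Ψ_{i+2} = T·Ψ_{i+1} − T'·T''·Ψ_i`, where `T = X 0`, `T' = X 1`,
`T'' = X 2`. -/
noncomputable def Psi : ℕ → MvPolynomial (Fin 3) ℂ
  | 0 => 1
  | 1 => X 0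
  | (n + 2) => X 0 * Psi (n + 1) - X 1 * X 2 * Psi n

/-- `q = x·y`, with variables `x = X 0`, `y = X 1`, `X = X 2`, `Y = X 3`. -/
noncomputable def qP : MvPolynomial (Fin 4) ℂ := X 0 * X 1
/-- `Q = X·Y`. -/
noncomputable def QP : MvPolynomial (Fin 4) ℂ := X 2 * X 3
/-- `eu₀ = x·X + y·Y`. -/
noncomputable def euP : MvPolynomial (Fin 4) ℂ := X 0 * X 2 + X 1 * X 3
/-- `a_j = x^{d−j}·Y^j + y^{d−j}·X^j`. -/
noncomputable def aP (d j : ℕ) : MvPolynomial (Fin 4) ℂ :=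
  X 0 ^ (d - j) * X 3 ^ j + X 1 ^ (d - j) * X 2 ^ j

theorem psi_key : ∀ n : ℕ,
    (X 0 * X 2 - X 1 * X 3 : MvPolynomial (Fin 4) ℂ) *
      MvPolynomial.aeval ![euP, qP, QP] (Psi n) =
    (X 0 * X 2) ^ (n + 1) - (X 1 * X 3) ^ (n + 1)
  | 0 => by simp [Psi]
  | 1 => by
      simp only [Psi, aeval_X, Matrix.cons_val_zero, euP]
      ring
  | (n + 2) => by
      have h1 := psi_key (n + 1)
      have h2 := psi_key n
      simp only [Psi, map_sub, map_mul, aeval_X, Matrix.cons_val_zero, Matrix.cons_val_one,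
        Matrix.head_cons, Matrix.cons_val_two, Matrix.tail_cons] at *
      unfold euP qP QP at *
      linear_combination (X 0 * X 2 + X 1 * X 3) * h1 -
        (X 0 * X 1 * (X 2 * X 3)) * h2

/-- for `1 ≤ i ≤ j ≤ d−1`,
`a_{i−1}·a_{j+1} − a_i·a_j = (eu₀² − 4qQ)·q^{d−j−1}·Q^{i−1}·Ψ_{j−i}(eu₀,q,Q)`. -/
theorem stmt2 (d : ℕ) (hd : 1 ≤ d) (i j : ℕ) (h1 : 1 ≤ i) (h2 : i ≤ j) (h3 : j ≤ d - 1) :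
    aP d (i - 1) * aP d (j + 1) - aP d i * aP d j =
      (euP ^ 2 - 4 * qP * QP) * qP ^ (d - j - 1) * QP ^ (i - 1) *
        MvPolynomial.aeval ![euP, qP, QP] (Psi (j - i)) := by
  obtain ⟨i', rfl⟩ : ∃ i', i = i' + 1 := ⟨i - 1, by omega⟩
  obtain ⟨n, rfl⟩ : ∃ n, j = i' + 1 + n := ⟨j - (i' + 1), by omega⟩
  obtain ⟨m, rfl⟩ : ∃ m, d = i' + 1 + n + 1 + m := ⟨d - (i' + 1 + n + 1), by omega⟩
  have key := psi_key n
  have e1 : i' + 1 + n + 1 + m - i' = n + m + 2 := by omega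
  have e2 : i' + 1 + n + 1 + m - (i' + 1 + n + 1) = m := by omega
  have e3 : i' + 1 + n + 1 + m - (i' + 1) = n + m + 1 := by omega
  have e4 : i' + 1 + n + 1 + m - (i' + 1 + n) = m + 1 := by omega
  have e5 : i' + 1 + n + 1 + m - (i' + 1 + n) - 1 = m := by omega
  have e6 : i' + 1 - 1 = i' := by omega
  have e7 : i' + 1 + n - (i' + 1) = n := by omega
  rw [e5, e6, e7]
  unfold aP
  rw [e1, e2, e3, e4]
  simp only [euP, qP, QP] at key ⊢
  linear_combination (-(X 0 * X 2 - X 1 * X 3) * (X 0 * X 1) ^ m * (X 2 * X 3) ^ i') * key
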